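/- Let S and S' be strings of equal length over the four-symbol alphabet {(, ), [, ]} such that in each string every bracket symbol ('[' or ']') has at least one parenthesis symbol ('(' or ')') before it, the last parenthesis preceding every '[' is ')', and the last parenthesis preceding every ']' is '('. If S and S' have parentheses at exactly the same positions (for every position p, S[p] ∈ {(, )} iff S'[p] ∈ {(, )}) and the subsequence of parenthesis symbols of S equals the subsequence of parenthesis symbols of S', then S = S'. (Hence such a string with s₁ parentheses and s₂ brackets is determined by s₁ + s₂ bits of position information plus s₁ bits of parenthesis orientations, i.e., 2s₁ + s₂ bits.) -/

import Mathlib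

/-- The four-symbol alphabet {(, ), [, ]}. -/
inductive Sym4 where
  | op   -- '('
  | cp   -- ')'
  | ob   -- '['
  | cb   -- ']'
deriving DecidableEq

/-- Whether a symbol is a parenthesis ('(' or ')'); otherwise it is a bracket. -/
def Sym4.isParen : Sym4 → Bool
  | .op => true
  | .cp => true
  | .ob => false
  | .cb => false

/-- `GoodString S` : every bracket symbol of `S` has at least one parenthesis symbol
before it, the last parenthesis preceding every '[' is ')', and the last parenthesis
preceding every ']' is '('. -/
def GoodString (S : List Sym4) : Prop :=
  (∀ (p : ℕ) (s : Sym4), S[p]? = some s → s.isParen = false →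
      ∃ q < p, ∃ s' : Sym4, S[q]? = some s' ∧ s'.isParen = true) ∧
  (∀ (p q : ℕ) (s' : Sym4), S[p]? = some Sym4.ob → q < p →
      S[q]? = some s' → s'.isParen = true →
      (∀ (r : ℕ) (s'' : Sym4), q < r → r < p → S[r]? = some s'' → s''.isParen = false) →
      s' = Sym4.cp) ∧
  (∀ (p q : ℕ) (s' : Sym4), S[p]? = some Sym4.cb → q < p →
      S[q]? = some s' → s'.isParen = true →
      (∀ (r : ℕ) (s'' : Sym4), q < r → r < p → S[r]? = some s'' → s''.isParen = false) →
      s' = Sym4.op)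

def parenAt (S : List Sym4) (q : ℕ) : Prop :=
  ((S[q]?).elim false Sym4.isParen) = true

instance (S : List Sym4) : DecidablePred (parenAt S) := fun q => by
  unfold parenAt; infer_instance

lemma paren_eq : ∀ (S S' : List Sym4),
    (∀ (p : ℕ) (s s' : Sym4), S[p]? = some s → S'[p]? = some s' → s.isParen = s'.isParen) →
    S.length = S'.length →
    S.filter Sym4.isParen = S'.filter Sym4.isParen →
    ∀ (p : ℕ) (s s' : Sym4), S[p]? = some s → S'[p]? = some s' → s.isParen = true → s = s'
  | [], _, _, _, _, p, s, s', h, _, _ => by simp at h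
  | _ :: _, [], _, hlen, _, _, _, _, _, _, _ => by simp at hlen
  | a :: S, b :: S', hpos, hlen, hsub, p, s, s', hgs, hgs', hp => by
    have hab : a.isParen = b.isParen := hpos 0 a b rfl rfl
    cases p with
    | zero =>
      simp only [List.getElem?_cons_zero, Option.some.injEq] at hgs hgs'
      subst hgs; subst hgs'
      rw [hp] at hab
      rw [List.filter_cons, List.filter_cons, hp, ← hab] at hsub
      simp at hsub
      exact hsub.1
    | succ p =>
      have htail : S.filter Sym4.isParen = S'.filter Sym4.isParen := by
        rw [List.filter_cons, List.filter_cons, ← hab] at hsub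
        cases h : a.isParen
        · rw [h] at hsub; simpa using hsub
        · rw [h] at hsub; simp at hsub; exact hsub.2
      exact paren_eq S S' (fun q t t' h h' => hpos (q+1) t t' h h')
        (by simpa using hlen) htail p s s' hgs hgs' hp

/-- Let `S` and `S'` be strings of equal length over {(, ), [, ]} such that in each
string every bracket has a parenthesis before it, the last parenthesis preceding
every '[' is ')' and the last parenthesis preceding every ']' is '('. If `S` and `S'`
have parentheses at exactly the same positions and their subsequences of parenthesis
symbols coincide, then `S = S'`. -/
theorem good_string_determined (S S' : List Sym4)
    (hlen : S.length = S'.length)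
    (hS : GoodString S) (hS' : GoodString S')
    (hpos : ∀ (p : ℕ) (s s' : Sym4), S[p]? = some s → S'[p]? = some s' →
      s.isParen = s'.isParen)
    (hsub : S.filter Sym4.isParen = S'.filter Sym4.isParen) :
    S = S' := by
  apply List.ext_getElem?
  intro p
  cases hSp : S[p]? with
  | none =>
    have h1 : S.length ≤ p := List.getElem?_eq_none_iff.mp hSp
    have : S'[p]? = none := List.getElem?_eq_none_iff.mpr (hlen ▸ h1)
    rw [this]
  | some s =>
    have hp : p < S'.length := hlen ▸ (List.getElem?_eq_some_iff.mp hSp).1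
    obtain ⟨s', hS'p⟩ : ∃ s', S'[p]? = some s' :=
      ⟨_, List.getElem?_eq_getElem hp⟩
    rw [hS'p]
    congr 1
    by_cases hpar : s.isParen = true
    · exact paren_eq S S' hpos hlen hsub p s s' hSp hS'p hpar
    · have hparf : s.isParen = false := by
        cases h : s.isParen
        · rfl
        · exact absurd h hpar
      have hparf' : s'.isParen = false := (hpos p s s' hSp hS'p) ▸ hparf
      obtain ⟨q0, hq0p, t0, ht0, ht0p⟩ := hS.1 p s hSp hparf
      have hppos : 0 < p := Nat.lt_of_le_of_lt (Nat.zero_le q0) hq0p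
      set q := Nat.findGreatest (parenAt S) (p-1) with hqdef
      have hq0le : q0 ≤ p - 1 := by omega
      have hPq0 : parenAt S q0 := by unfold parenAt; rw [ht0]; exact ht0p
      have hPq : parenAt S q := Nat.findGreatest_spec hq0le hPq0
      have hqle : q ≤ p - 1 := Nat.findGreatest_le _
      have hqp : q < p := by omega
      have hmax : ∀ (r : ℕ) (u : Sym4), q < r → r < p → S[r]? = some u →
          u.isParen = false := by
        intro r u hqr hrp hget
        by_contra hc
        have hu : u.isParen = true := by
          cases h : u.isParen
          · exact absurd h hc
          · rfl
        exact Nat.findGreatest_is_greatest hqr (by omega)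
          (by unfold parenAt; rw [hget]; exact hu)
      obtain ⟨t, hgt, htp⟩ : ∃ t, S[q]? = some t ∧ t.isParen = true := by
        unfold parenAt at hPq
        cases h : S[q]? with
        | none => rw [h] at hPq; simp at hPq
        | some t => rw [h] at hPq; exact ⟨t, rfl, hPq⟩
      have hq' : q < S'.length := by omega
      obtain ⟨t', hgt'⟩ : ∃ t', S'[q]? = some t' :=
        ⟨_, List.getElem?_eq_getElem hq'⟩
      have htt' : t = t' := paren_eq S S' hpos hlen hsub q t t' hgt hgt' htp
      have htp' : t'.isParen = true := htt' ▸ htp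
      have hmax' : ∀ (r : ℕ) (u : Sym4), q < r → r < p → S'[r]? = some u →
          u.isParen = false := by
        intro r u hqr hrp hget
        have hr : r < S.length := by omega
        obtain ⟨u0, hgu0⟩ : ∃ u0, S[r]? = some u0 := ⟨_, List.getElem?_eq_getElem hr⟩
        have := hpos r u0 u hgu0 hget
        rw [← this]
        exact hmax r u0 hqr hrp hgu0
      -- case analysis on s and s'
      cases s with
      | op => simp [Sym4.isParen] at hparf
      | cp => simp [Sym4.isParen] at hparf
      | ob =>
        have ht : t = Sym4.cp := hS.2.1 p q t hSp hqp hgt htp hmax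
        cases s' with
        | op => simp [Sym4.isParen] at hparf'
        | cp => simp [Sym4.isParen] at hparf'
        | ob => rfl
        | cb =>
          have ht' : t' = Sym4.op := hS'.2.2 p q t' hS'p hqp hgt' htp' hmax'
          rw [← htt', ht] at ht'
          exact absurd ht' (by simp)
      | cb =>
        have ht : t = Sym4.op := hS.2.2 p q t hSp hqp hgt htp hmax
        cases s' with
        | op => simp [Sym4.isParen] at hparf'
        | cp => simp [Sym4.isParen] at hparf'
        | cb => rfl
        | ob =>
          have ht' : t' = Sym4.cp := hS'.2.1 p q t' hS'p hqp hgt' htp' hmax'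
          rw [← htt', ht] at ht'
          exact absurd ht' (by simp)
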